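/- Let u(x) = x¹ (2 + sin ln ln ln(64/|x|)) on B₄ \ {0} ⊂ ℝⁿ, n ≥ 2. Then ∇u ∈ L^∞(B₄) but ∇u does not extend continuously to the origin (i.e., ∇u has no limit as x → 0). -/

import Mathlib

/-!
Write `u y = ℓ y * g ‖y‖` with `ℓ` the first coordinate and `g t = 2 + sin (log log log (64 / t))`.
Then `Du x = ℓ x • g' ‖x‖ • D‖·‖ x + g ‖x‖ • ℓ`, and on `B₄` one has
`‖x‖ * |g' ‖x‖| = |cos …| / (log (64 / ‖x‖) * log log (64 / ‖x‖)) ≤ 1`, which bounds the gradient.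
At radii where `cos (log log log (64 / t)) = 0` the first term vanishes and `Du = g t • ℓ`;
such radii accumulate at `0` both with `g t = 3` and with `g t = 1`, so `Du` has no limit at `0`.
-/

open Real MeasureTheory Metric

open Filter Topology

section RadialProduct

variable {E : Type*} [NormedAddCommGroup E] [InnerProductSpace ℝ E]
  (ℓ : StrongDual ℝ E) {f : ℝ → ℝ} {f' : ℝ} {x : E}

theorem hasFDerivAt_mul_comp_norm (hf : HasDerivAt f f' ‖x‖) (hx : x ≠ 0) :
    HasFDerivAt (fun y => ℓ y * f ‖y‖) (ℓ x • (f' • fderiv ℝ (‖·‖) x) + f ‖x‖ • ℓ) x :=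
  ℓ.hasFDerivAt.mul (hf.comp_hasFDerivAt x ((contDiffAt_norm ℝ hx).differentiableAt
    one_ne_zero).hasFDerivAt)

theorem norm_fderiv_mul_comp_norm_le (hf : HasDerivAt f f' ‖x‖) (hx : x ≠ 0) :
    ‖fderiv ℝ (fun y => ℓ y * f ‖y‖) x‖ ≤ ‖ℓ‖ * (‖x‖ * |f'| + |f ‖x‖|) := by
  have hnorm : ‖fderiv ℝ (‖·‖) x‖ ≤ 1 := by
    simpa using norm_fderiv_le_of_lipschitz ℝ (lipschitzWith_one_norm (E := E)) (x₀ := x)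
  rw [(hasFDerivAt_mul_comp_norm ℓ hf hx).fderiv]
  calc ‖ℓ x • (f' • fderiv ℝ (‖·‖) x) + f ‖x‖ • ℓ‖
      ≤ ‖ℓ x‖ * (|f'| * ‖fderiv ℝ (‖·‖) x‖) + |f ‖x‖| * ‖ℓ‖ := by
        refine (norm_add_le _ _).trans ?_
        simp only [norm_smul, Real.norm_eq_abs, le_refl]
    _ ≤ ‖ℓ‖ * ‖x‖ * (|f'| * 1) + |f ‖x‖| * ‖ℓ‖ := by
        gcongr
        exact ℓ.le_opNorm x
    _ = ‖ℓ‖ * (‖x‖ * |f'| + |f ‖x‖|) := by ring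

theorem fderiv_mul_comp_norm_of_hasDerivAt_zero (hf : HasDerivAt f 0 ‖x‖) (hx : x ≠ 0) :
    fderiv ℝ (fun y => ℓ y * f ‖y‖) x = f ‖x‖ • ℓ := by
  simp [(hasFDerivAt_mul_comp_norm ℓ hf hx).fderiv]

theorem eq_smul_of_tendsto_fderiv_mul_comp_norm [Nontrivial E] {L : StrongDual ℝ E}
    (hL : Tendsto (fderiv ℝ (fun y => ℓ y * f ‖y‖)) (𝓝[≠] 0) (𝓝 L)) {a : ℝ}
    (ha : ∃ᶠ t in 𝓝[>] 0, HasDerivAt f 0 t ∧ f t = a) : L = a • ℓ := by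
  obtain ⟨v, hv⟩ := exists_norm_eq E zero_le_one
  have hv0 : v ≠ 0 := by rintro rfl; simp at hv
  have hray : Tendsto (fun t : ℝ => t • v) (𝓝[>] 0) (𝓝[≠] 0) := by
    refine tendsto_nhdsWithin_of_tendsto_nhds_of_eventually_within _ ?_ ?_
    · have hcont : Continuous fun t : ℝ => t • v := continuous_id.smul continuous_const
      simpa using (hcont.tendsto 0).mono_left nhdsWithin_le_nhds
    · filter_upwards [eventually_mem_nhdsWithin] with t ht
      exact smul_ne_zero (ne_of_gt ht) hv0
  by_contra hne
  obtain ⟨t, ⟨hcrit, rfl⟩, ht, hfne⟩ :=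
    (ha.and_eventually (eventually_mem_nhdsWithin.and ((hL.comp hray).eventually_ne hne))).exists
  have hnt : ‖t • v‖ = t := by rw [norm_smul, hv, mul_one, Real.norm_of_nonneg (le_of_lt ht)]
  apply hfne
  rw [Function.comp_apply, fderiv_mul_comp_norm_of_hasDerivAt_zero ℓ (by rwa [hnt])
    (smul_ne_zero (ne_of_gt ht) hv0), hnt]

end RadialProduct

noncomputable def oscillatingFactor (t : ℝ) : ℝ := 2 + sin (log (log (log (64 / t))))

theorem hasDerivAt_oscillatingFactor {t : ℝ} (ht : 0 < t) (h₁ : log (64 / t) ≠ 0)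
    (h₂ : log (log (64 / t)) ≠ 0) :
    HasDerivAt oscillatingFactor
      (-cos (log (log (log (64 / t)))) / (t * log (64 / t) * log (log (64 / t)))) t := by
  have hdiv : HasDerivAt (fun s : ℝ => 64 / s) (-64 / t ^ 2) t := by
    simpa [div_eq_mul_inv, neg_div, mul_neg] using (hasDerivAt_inv ht.ne').const_mul (64 : ℝ)
  refine ((((hdiv.log (by positivity)).log h₁).log h₂).sin.const_add 2).congr_deriv ?_
  field_simp

theorem exp_one_lt_log_sixtyFour_div {t : ℝ} (ht : 0 < t) (ht4 : t < 4) :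
    exp 1 < log (64 / t) := by
  have h16 : log 16 < log (64 / t) :=
    log_lt_log (by norm_num) (by rw [lt_div_iff₀ ht]; linarith)
  have hlog16 : log 16 = 4 * log 2 := by
    rw [show (16 : ℝ) = 2 ^ 4 by norm_num, log_pow]; norm_num
  linarith [log_two_gt_d9, exp_one_lt_d9]

theorem exists_hasDerivAt_oscillatingFactor_with_bound {t : ℝ} (ht : 0 < t) (ht4 : t < 4) :
    ∃ f', HasDerivAt oscillatingFactor f' t ∧ t * |f'| + |oscillatingFactor t| ≤ 4 := by
  have he := exp_one_lt_log_sixtyFour_div ht ht4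
  have hL : 1 < log (64 / t) := by linarith [add_one_lt_exp one_ne_zero]
  have hLL : 1 < log (log (64 / t)) := (lt_log_iff_exp_lt (by linarith)).2 he
  refine ⟨_, hasDerivAt_oscillatingFactor ht (by positivity) (by positivity), ?_⟩
  set φ := log (log (log (64 / t)))
  have hderiv : t * |-cos φ / (t * log (64 / t) * log (log (64 / t)))| ≤ 1 := by
    have hden : 0 < t * log (64 / t) * log (log (64 / t)) :=
      mul_pos (mul_pos ht (by linarith)) (by linarith)
    rw [abs_div, abs_neg, abs_of_pos hden, mul_div_assoc', div_le_one hden]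
    calc t * |cos φ| ≤ t * 1 := by gcongr; exact abs_cos_le_one φ
      _ ≤ t * log (64 / t) * log (log (64 / t)) := by rw [mul_assoc]; gcongr; nlinarith
  have hvalue : |2 + sin φ| ≤ 3 :=
    abs_le.2 ⟨by linarith [neg_one_le_sin φ], by linarith [sin_le_one φ]⟩
  exact add_le_add hderiv hvalue |>.trans (by norm_num)

theorem frequently_hasDerivAt_oscillatingFactor_zero {θ : ℝ} (hθ : cos θ = 0) :
    ∃ᶠ t in 𝓝[>] 0, HasDerivAt oscillatingFactor 0 t ∧ oscillatingFactor t = 2 + sin θ := by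
  set φ : ℕ → ℝ := fun k => θ + k * (2 * π)
  -- `t = 64 * exp (-exp (exp φ))` inverts `t ↦ log (log (log (64 / t)))`
  set r : ℕ → ℝ := fun k => 64 * exp (-exp (exp (φ k)))
  have hφ : Tendsto φ atTop atTop :=
    tendsto_atTop_add_const_left _ _ (tendsto_natCast_atTop_atTop.atTop_mul_const (by positivity))
  have hr : Tendsto r atTop (𝓝[>] 0) := by
    refine tendsto_nhdsWithin_iff.2
      ⟨?_, Eventually.of_forall fun k => Set.mem_Ioi.2 (by positivity)⟩
    simpa using (tendsto_exp_neg_atTop_nhds_zero.comp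
      (tendsto_exp_atTop.comp (tendsto_exp_atTop.comp hφ))).const_mul 64
  refine hr.frequently (Frequently.of_forall fun k => ?_)
  have hL : log (64 / r k) = exp (exp (φ k)) := by
    rw [show 64 / r k = exp (exp (exp (φ k))) by simp only [r, exp_neg]; field_simp, log_exp]
  have hcos : cos (φ k) = 0 := by rw [cos_add_nat_mul_two_pi, hθ]
  constructor
  · refine (hasDerivAt_oscillatingFactor (by positivity) ?_ ?_).congr_deriv ?_
    all_goals simp [hL, hcos]
  · simp [oscillatingFactor, hL, φ, sin_add_nat_mul_two_pi]

theorem gradient_bounded_but_not_continuous (n : ℕ) (hn : 2 ≤ n) :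
    let u : EuclideanSpace ℝ (Fin n) → ℝ := fun y =>
      y ⟨0, by omega⟩ * (2 + Real.sin (Real.log (Real.log (Real.log (64 / ‖y‖)))))
    (∃ M : ℝ, ∀ x ∈ ball (0 : EuclideanSpace ℝ (Fin n)) 4 \ {0},
      ‖fderiv ℝ u x‖ ≤ M) ∧
    ¬ ∃ L : EuclideanSpace ℝ (Fin n) →L[ℝ] ℝ,
      Filter.Tendsto (fun x => fderiv ℝ u x)
        (nhdsWithin (0 : EuclideanSpace ℝ (Fin n)) {(0 : EuclideanSpace ℝ (Fin n))}ᶜ)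
        (nhds L) := by
  intro u
  have : NeZero n := ⟨by omega⟩
  set ℓ : StrongDual ℝ (EuclideanSpace ℝ (Fin n)) := EuclideanSpace.proj 0
  have hu : u = fun y => ℓ y * oscillatingFactor ‖y‖ := rfl
  rw [hu]
  refine ⟨⟨‖ℓ‖ * 4, fun x hx => ?_⟩, fun ⟨L, hL⟩ => ?_⟩
  · have hx0 : x ≠ 0 := hx.2
    obtain ⟨f', hf', hbound⟩ := exists_hasDerivAt_oscillatingFactor_with_bound
      (norm_pos_iff.2 hx0) (mem_ball_zero_iff.1 hx.1)
    exact (norm_fderiv_mul_comp_norm_le ℓ hf' hx0).trans (by gcongr)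
  · have h₃ := eq_smul_of_tendsto_fderiv_mul_comp_norm ℓ hL
      (frequently_hasDerivAt_oscillatingFactor_zero cos_pi_div_two)
    have h₁ := eq_smul_of_tendsto_fderiv_mul_comp_norm ℓ hL
      (frequently_hasDerivAt_oscillatingFactor_zero (θ := -(π / 2)) (by simp))
    have h := congr($(h₃.symm.trans h₁) (EuclideanSpace.single 0 1))
    norm_num [ℓ] at h
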